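/- arXiv:1307.6750 — 2 statements merged into one kernel-verified Lean document; each statement's English description precedes it below -/
import Mathlib

section
/- Let z ∈ EP₂ satisfy z(t) < t for all t ∈ ℝ, and let C_F(z) = {g ∈ F : g ∘ z = z ∘ g}. Then for every g ∈ C_F(z) the limit lim_{t→−∞}(g(t) − t) exists and is an integer, and the map φ_z : C_F(z) → ℤ defined by φ_z(g) = lim_{t→−∞}(g(t) − t) is an injective group homomorphism. The analogous statement holds when z(t) > t for all t ∈ ℝ. -/
noncomputable section

open Filter Topology

/-- A real number is a dyadic rational. -/
def IsDyadic (x : ℝ) : Prop := ∃ m k : ℤ, x = (m : ℝ) * 2 ^ k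

/-- `IsPL2 f` says that `f : ℝ → ℝ` is an orientation-preserving piecewise-linear
homeomorphism of the real line, with a discrete set of breakpoints (it is affine on a
small interval on each side of every point), every breakpoint a dyadic rational, and
every slope an integer power of `2`. -/
def IsPL2 (f : ℝ → ℝ) : Prop :=
  Function.Bijective f ∧ StrictMono f ∧
    ∀ t : ℝ, ∃ (ε : ℝ) (a b : ℤ), 0 < ε ∧
      (∀ s : ℝ, t - ε ≤ s → s ≤ t → f s = f t + (2 : ℝ) ^ a * (s - t)) ∧
      (∀ s : ℝ, t ≤ s → s ≤ t + ε → f s = f t + (2 : ℝ) ^ b * (s - t)) ∧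
      (a ≠ b → IsDyadic t)

/-- `EP₂`: elements of `PL₂(ℝ)` which are eventually periodic near `±∞`. -/
def IsEP2 (f : ℝ → ℝ) : Prop :=
  IsPL2 f ∧ ∃ L R : ℝ, L ≤ R ∧ (∀ t : ℝ, t ≤ L → f (t - 1) = f t - 1) ∧
    (∀ t : ℝ, R ≤ t → f (t + 1) = f t + 1)

/-- Thompson's group `F`, realized inside `EP₂` as the maps which are eventually
integral translations near `±∞`. -/
def IsThompsonF (f : ℝ → ℝ) : Prop :=
  IsEP2 f ∧ ∃ (L R : ℝ) (mneg mpos : ℤ), L ≤ R ∧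
    (∀ t : ℝ, t ≤ L → f t = t + (mneg : ℝ)) ∧ (∀ t : ℝ, R ≤ t → f t = t + (mpos : ℝ))

/-!
Near `-∞` every element of `F` is a translation `t ↦ t + m₋`, so `φ_z(g) = m₋`, and translation
germs at `-∞` compose additively. If `φ_z(g₁) = φ_z(g₂)`, then `h = g₁ g₂⁻¹` fixes every point
near `-∞` and commutes with `z`. Since `z` is a continuous map without fixed points, the orbit of
any point under `z` (or under `z⁻¹`, depending on the side) tends to `-∞`; `h` commutes with the
iterates, so it fixes the whole orbit once it fixes one point of it far enough out, hence `h = 1`.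
-/

section FixedPointFree

variable {α : Type*} [ConditionallyCompleteLinearOrder α] [TopologicalSpace α] [OrderTopology α]

theorem tendsto_iterate_atBot_of_forall_lt {w : α → α} (hw : Continuous w) (hlt : ∀ t, w t < t)
    (s : α) : Tendsto (fun n => w^[n] s) atTop atBot := by
  have hanti : Antitone fun n => w^[n] s := fun _ _ hmn =>
    Function.antitone_iterate_of_le_id (fun t => (hlt t).le) hmn s
  refine (tendsto_atTop_of_antitone hanti).resolve_right ?_
  rintro ⟨l, hl⟩
  exact (hlt l).ne (isFixedPt_of_tendsto_iterate hl hw.continuousAt)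

namespace Equiv.Perm

theorem eq_one_of_commute_of_forall_lt {w h : Perm α} (hw : Continuous w) (hlt : ∀ t, w t < t)
    (hcomm : Commute h w) (hfix : ∀ᶠ t in atBot, h t = t) : h = 1 := by
  ext t
  obtain ⟨n, hn⟩ := ((tendsto_iterate_atBot_of_forall_lt hw hlt t).eventually hfix).exists
  apply (w ^ n).injective
  rw [← mul_apply, ← (hcomm.pow_right n).eq, mul_apply, coe_pow, hn, one_apply]

theorem eq_one_of_commute_of_strictMono [DenselyOrdered α] {z h : Perm α} (hz : StrictMono z)
    (hside : (∀ t, z t < t) ∨ (∀ t, t < z t)) (hcomm : Commute h z)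
    (hfix : ∀ᶠ t in atBot, h t = t) : h = 1 := by
  rcases hside with hlt | hgt
  · exact eq_one_of_commute_of_forall_lt (hz.monotone.continuous_of_surjective z.surjective)
      hlt hcomm hfix
  · have hmono : Monotone ⇑z⁻¹ := fun a b hab => hz.le_iff_le.mp (by simpa using hab)
    refine eq_one_of_commute_of_forall_lt (hmono.continuous_of_surjective z⁻¹.surjective)
      (fun t => ?_) hcomm.inv_right hfix
    simpa using hgt (z⁻¹ t)

end Equiv.Perm

end FixedPointFree

section TranslationGerm

theorem tendsto_sub_atBot_of_eventually_eq_add {α : Type*} [AddCommGroup α] [Preorder α]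
    [TopologicalSpace α] {g : α → α} {m : α}
    (hg : ∀ᶠ t in atBot, g t = t + m) : Tendsto (fun t => g t - t) atBot (𝓝 m) :=
  tendsto_const_nhds.congr' (hg.mono fun t ht => by simp only [ht, add_sub_cancel_left])

variable {α : Type*} [AddCommGroup α] [PartialOrder α] [IsOrderedAddMonoid α]

theorem eventually_comp_eq_add_add {g₁ g₂ : α → α} {m₁ m₂ : α}
    (h₁ : ∀ᶠ t in atBot, g₁ t = t + m₁) (h₂ : ∀ᶠ t in atBot, g₂ t = t + m₂) :
    ∀ᶠ t in atBot, g₁ (g₂ t) = t + (m₁ + m₂) := by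
  have hg₂ : Tendsto g₂ atBot atBot :=
    (tendsto_atBot_add_const_right _ m₂ tendsto_id).congr' (h₂.mono fun t ht => ht.symm)
  filter_upwards [h₂, hg₂.eventually h₁] with t ht₂ ht₁
  rw [ht₁, ht₂, add_right_comm, add_assoc]

theorem Equiv.Perm.eventually_inv_eq_add_neg {g : Perm α} {m : α}
    (hg : ∀ᶠ t in atBot, g t = t + m) : ∀ᶠ t in atBot, g⁻¹ t = t + -m := by
  filter_upwards [(tendsto_atBot_add_const_right _ (-m) tendsto_id).eventually hg] with t
    (ht : g (t + -m) = t + -m + m)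
  rw [Perm.inv_eq_iff_eq, ht, neg_add_cancel_right]

end TranslationGerm

theorem IsThompsonF.exists_eventually_eq_add {g : ℝ → ℝ} (hg : IsThompsonF g) :
    ∃ m : ℤ, ∀ᶠ t in atBot, g t = t + m := by
  obtain ⟨-, L, -, m, -, -, hL, -⟩ := hg
  exact ⟨m, eventually_atBot.mpr ⟨L, hL⟩⟩

theorem IsThompsonF.eventually_eq_add_of_tendsto {g : ℝ → ℝ} {m : ℝ} (hg : IsThompsonF g)
    (hm : Tendsto (fun t => g t - t) atBot (𝓝 m)) : ∀ᶠ t in atBot, g t = t + m := by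
  obtain ⟨n, hn⟩ := hg.exists_eventually_eq_add
  rwa [tendsto_nhds_unique hm (tendsto_sub_atBot_of_eventually_eq_add hn)]

/-- **Statement 4.** For `z ∈ EP₂` with `z(t) < t` for all `t` (or `z(t) > t` for all
`t`), every element `g` of the centralizer `C_F(z) = {g ∈ F : g ∘ z = z ∘ g}` has an
integer limit `φ_z(g) = lim_{t → -∞} (g(t) - t)`, and `φ_z : C_F(z) → ℤ` is an
injective group homomorphism. -/
theorem centralizer_translation_number (z : Equiv.Perm ℝ) (hz : IsEP2 ⇑z)
    (hside : (∀ t : ℝ, z t < t) ∨ (∀ t : ℝ, t < z t)) :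
    (∀ g : Equiv.Perm ℝ, IsThompsonF ⇑g → g * z = z * g →
      ∃ m : ℤ, Tendsto (fun t : ℝ => g t - t) atBot (𝓝 (m : ℝ))) ∧
    (∀ g₁ g₂ : Equiv.Perm ℝ, ∀ m₁ m₂ : ℤ,
      IsThompsonF ⇑g₁ → IsThompsonF ⇑g₂ → g₁ * z = z * g₁ → g₂ * z = z * g₂ →
      Tendsto (fun t : ℝ => g₁ t - t) atBot (𝓝 (m₁ : ℝ)) →
      Tendsto (fun t : ℝ => g₂ t - t) atBot (𝓝 (m₂ : ℝ)) →
      Tendsto (fun t : ℝ => (g₁ * g₂) t - t) atBot (𝓝 ((m₁ + m₂ : ℤ) : ℝ)) ∧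
        (m₁ = m₂ → g₁ = g₂)) := by
  obtain ⟨⟨-, hmono, -⟩, -⟩ := hz
  refine ⟨fun g hg _ => ?_, fun g₁ g₂ m₁ m₂ hg₁ hg₂ hc₁ hc₂ ht₁ ht₂ => ?_⟩
  · obtain ⟨m, hm⟩ := hg.exists_eventually_eq_add
    exact ⟨m, tendsto_sub_atBot_of_eventually_eq_add hm⟩
  have h₁ := hg₁.eventually_eq_add_of_tendsto ht₁
  have h₂ := hg₂.eventually_eq_add_of_tendsto ht₂
  refine ⟨?_, fun hm => ?_⟩
  · rw [Int.cast_add]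
    show Tendsto (fun t => g₁ (g₂ t) - t) atBot _
    exact tendsto_sub_atBot_of_eventually_eq_add (eventually_comp_eq_add_add h₁ h₂)
  subst hm
  have hfix : ∀ᶠ t in atBot, (g₁ * g₂⁻¹) t = t := by
    filter_upwards [eventually_comp_eq_add_add h₁ (Equiv.Perm.eventually_inv_eq_add_neg h₂)]
      with t ht
    rwa [add_neg_cancel, add_zero] at ht
  have hcomm : Commute (g₁ * g₂⁻¹) z := Commute.mul_left hc₁ (Commute.inv_left hc₂)
  exact mul_inv_eq_one.mp (Equiv.Perm.eq_one_of_commute_of_strictMono hmono hside hcomm hfix)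
end
end

section
/- (Simultaneous transitivity.) Let η < ζ be dyadic rationals and let η < α₁ < ⋯ < α_r < ζ and η < β₁ < ⋯ < β_r < ζ be two finite sequences of rational numbers. Then there exists g ∈ F with g(α_i) = β_i for all i = 1, …, r if and only if for every i = 1, …, r there exists g_i ∈ F with g_i(α_i) = β_i. -/
noncomputable section

open Filter Topology

/-!
Every `f ∈ F` maps `x` into `2 ^ ℤ • x + ℤ[1/2]`. Indeed, whether the left germ of `f` at a
point is a dyadic affine map is a locally constant property on `ℝ` (it can only change at a
breakpoint, and breakpoints are dyadic), and it holds near `-∞`, where `f` is an integral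
translation.

Conversely, dilations by `2 ^ k` about a dyadic point `c` are realized on a neighbourhood of
`[c, x]` by elements of `F` fixing `(-∞, c]`. Composing them moves any `x` to any
`y ∈ 2 ^ ℤ • x + ℤ[1/2]` while fixing a prescribed half-line below both points, so the
`αᵢ` can be sent to the `βᵢ` one at a time, from left to right.
-/

open Set Function

theorem isDyadic_intCast (m : ℤ) : IsDyadic m := ⟨m, 0, by simp⟩

theorem isDyadic_zpow (k : ℤ) : IsDyadic (2 ^ k) := ⟨1, k, by simp⟩

namespace IsDyadic

variable {x y : ℝ}

theorem neg (hx : IsDyadic x) : IsDyadic (-x) := by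
  obtain ⟨m, k, rfl⟩ := hx
  exact ⟨-m, k, by push_cast; ring⟩

theorem add (hx : IsDyadic x) (hy : IsDyadic y) : IsDyadic (x + y) := by
  obtain ⟨m, k, rfl⟩ := hx
  obtain ⟨n, l, rfl⟩ := hy
  wlog hkl : k ≤ l generalizing m n k l
  · simpa only [add_comm] using this n l m k (le_of_not_ge hkl)
  obtain ⟨j, rfl⟩ := Int.le.dest hkl
  refine ⟨m + n * 2 ^ j, k, ?_⟩
  push_cast
  rw [zpow_add₀ two_ne_zero, zpow_natCast]
  ring

theorem sub (hx : IsDyadic x) (hy : IsDyadic y) : IsDyadic (x - y) := by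
  simpa only [sub_eq_add_neg] using hx.add hy.neg

theorem mul (hx : IsDyadic x) (hy : IsDyadic y) : IsDyadic (x * y) := by
  obtain ⟨m, k, rfl⟩ := hx
  obtain ⟨n, l, rfl⟩ := hy
  exact ⟨m * n, k + l, by push_cast; rw [zpow_add₀ two_ne_zero]; ring⟩

end IsDyadic

theorem exists_isDyadic_btwn {a b : ℝ} (h : a < b) : ∃ d, IsDyadic d ∧ a < d ∧ d < b := by
  obtain ⟨N, hN⟩ := pow_unbounded_of_one_lt (b - a)⁻¹ one_lt_two
  obtain ⟨z, hz⟩ := exists_div_btwn (n := 2 ^ N) h (by exact_mod_cast hN)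
  refine ⟨_, ⟨z, -N, ?_⟩, hz⟩
  rw [zpow_neg, zpow_natCast, div_eq_mul_inv]
  push_cast
  rfl

/-- The orbit relation of `F` on `ℝ`. -/
def DyadicAffineRel (x y : ℝ) : Prop := ∃ (a : ℤ) (d : ℝ), IsDyadic d ∧ y = 2 ^ a * x + d

namespace DyadicAffineRel

variable {x y z : ℝ}

theorem symm (h : DyadicAffineRel x y) : DyadicAffineRel y x := by
  obtain ⟨a, d, hd, rfl⟩ := h
  refine ⟨-a, -(2 ^ (-a) * d), ((isDyadic_zpow _).mul hd).neg, ?_⟩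
  rw [zpow_neg]
  field_simp
  ring

theorem trans (h₁ : DyadicAffineRel x y) (h₂ : DyadicAffineRel y z) : DyadicAffineRel x z := by
  obtain ⟨a, d, hd, rfl⟩ := h₁
  obtain ⟨b, e, he, rfl⟩ := h₂
  exact ⟨b + a, 2 ^ b * d + e, ((isDyadic_zpow _).mul hd).add he,
    by rw [zpow_add₀ two_ne_zero]; ring⟩

theorem isDyadic (h : DyadicAffineRel x y) (hx : IsDyadic x) : IsDyadic y := by
  obtain ⟨a, d, hd, rfl⟩ := h
  exact ((isDyadic_zpow a).mul hx).add hd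

end DyadicAffineRel

def HasSlopeWithin (f : ℝ → ℝ) (s : Set ℝ) (t : ℝ) (a : ℤ) : Prop :=
  ∀ᶠ u in 𝓝[s] t, f u = f t + 2 ^ a * (u - t)

def HasPL2GermAt (f : ℝ → ℝ) (t : ℝ) : Prop :=
  ∃ a b : ℤ, HasSlopeWithin f (Iic t) t a ∧ HasSlopeWithin f (Ici t) t b ∧ (a ≠ b → IsDyadic t)

section Germs

variable {f g : ℝ → ℝ} {s s' : Set ℝ} {t l r d e : ℝ} {a b : ℤ}

theorem hasSlopeWithin_Iic_of_Icc (hl : l < t) (h : ∀ u ∈ Icc l t, f u = 2 ^ a * u + d) :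
    HasSlopeWithin f (Iic t) t a :=
  mem_of_superset (Icc_mem_nhdsLE hl) fun u hu => by
    rw [mem_ofPred_eq, h u hu, h t ⟨hl.le, le_rfl⟩]; ring

theorem hasSlopeWithin_Ici_of_Icc (hr : t < r) (h : ∀ u ∈ Icc t r, f u = 2 ^ a * u + d) :
    HasSlopeWithin f (Ici t) t a :=
  mem_of_superset (Icc_mem_nhdsGE hr) fun u hu => by
    rw [mem_ofPred_eq, h u hu, h t ⟨le_rfl, hr.le⟩]; ring

theorem hasPL2GermAt_of_Icc (hl : l < t) (hr : t < r) (hL : ∀ u ∈ Icc l t, f u = 2 ^ a * u + d)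
    (hR : ∀ u ∈ Icc t r, f u = 2 ^ b * u + e) (hab : a ≠ b → IsDyadic t) : HasPL2GermAt f t :=
  ⟨a, b, hasSlopeWithin_Iic_of_Icc hl hL, hasSlopeWithin_Ici_of_Icc hr hR, hab⟩

theorem hasPL2GermAt_of_mem_Ioo (ht : t ∈ Ioo l r) (h : ∀ u ∈ Icc l r, f u = 2 ^ a * u + d) :
    HasPL2GermAt f t :=
  hasPL2GermAt_of_Icc ht.1 ht.2 (fun u hu => h u ⟨hu.1, hu.2.trans ht.2.le⟩)
    (fun u hu => h u ⟨ht.1.le.trans hu.1, hu.2⟩) (absurd rfl)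

theorem isPL2_iff : IsPL2 f ↔ Bijective f ∧ StrictMono f ∧ ∀ t, HasPL2GermAt f t := by
  refine and_congr_right fun _ => and_congr_right fun _ => forall_congr' fun t => ⟨?_, ?_⟩
  · rintro ⟨ε, a, b, hε, hL, hR, hab⟩
    exact ⟨a, b, mem_of_superset (Icc_mem_nhdsLE (by linarith)) fun u hu => hL u hu.1 hu.2,
      mem_of_superset (Icc_mem_nhdsGE (by linarith)) fun u hu => hR u hu.1 hu.2, hab⟩
  · rintro ⟨a, b, hL, hR, hab⟩
    obtain ⟨l, hl, hL⟩ := mem_nhdsLE_iff_exists_Icc_subset.1 hL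
    obtain ⟨r, hr, hR⟩ := mem_nhdsGE_iff_exists_Icc_subset.1 hR
    have hl' := min_le_left (t - l) (r - t)
    have hr' := min_le_right (t - l) (r - t)
    exact ⟨min (t - l) (r - t), a, b, lt_min (by linarith) (by linarith),
      fun u h₁ h₂ => hL ⟨by linarith, h₂⟩, fun u h₁ h₂ => hR ⟨h₁, by linarith⟩, hab⟩

theorem IsPL2.hasPL2GermAt (hf : IsPL2 f) (t : ℝ) : HasPL2GermAt f t :=
  (isPL2_iff.1 hf).2.2 t

theorem HasSlopeWithin.continuousWithinAt (h : HasSlopeWithin f s t a) :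
    ContinuousWithinAt f s t :=
  (continuous_const.add (continuous_const.mul (continuous_id.sub continuous_const))
    |>.continuousWithinAt).congr_of_eventuallyEq h (by simp)

theorem HasPL2GermAt.continuousAt (h : HasPL2GermAt f t) : ContinuousAt f t := by
  obtain ⟨a, b, hL, hR, -⟩ := h
  exact continuousAt_iff_continuous_left_right.2 ⟨hL.continuousWithinAt, hR.continuousWithinAt⟩

theorem HasSlopeWithin.comp (hf : HasSlopeWithin f s' (g t) a) (hg : HasSlopeWithin g s t b)
    (hmaps : MapsTo g s s') : HasSlopeWithin (f ∘ g) s t (b + a) := by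
  filter_upwards [(hg.continuousWithinAt.tendsto_nhdsWithin hmaps).eventually hf, hg]
    with u hfu hgu
  rw [comp_apply, comp_apply, hfu, hgu, zpow_add₀ two_ne_zero]
  ring

theorem isPL2_of_strictMono (hmono : StrictMono f) (hgerm : ∀ t, HasPL2GermAt f t)
    (htop : Tendsto f atTop atTop) (hbot : Tendsto f atBot atBot) : IsPL2 f :=
  have hcont : Continuous f := continuous_iff_continuousAt.2 fun t => (hgerm t).continuousAt
  isPL2_iff.2 ⟨⟨hmono.injective, hcont.surjective htop hbot⟩, hmono, hgerm⟩

theorem IsPL2.comp (hf : IsPL2 f) (hg : IsPL2 g) (hgd : ∀ t, IsDyadic (g t) → IsDyadic t) :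
    IsPL2 (f ∘ g) := by
  obtain ⟨hfbij, hfmono, hfgerm⟩ := isPL2_iff.1 hf
  obtain ⟨hgbij, hgmono, hggerm⟩ := isPL2_iff.1 hg
  refine isPL2_iff.2 ⟨hfbij.comp hgbij, hfmono.comp hgmono, fun t => ?_⟩
  obtain ⟨a₁, b₁, hL₁, hR₁, hd₁⟩ := hggerm t
  obtain ⟨a₂, b₂, hL₂, hR₂, hd₂⟩ := hfgerm (g t)
  refine ⟨a₁ + a₂, b₁ + b₂, hL₂.comp hL₁ hgmono.monotone.mapsTo_Iic,
    hR₂.comp hR₁ hgmono.monotone.mapsTo_Ici, fun hne => ?_⟩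
  by_cases h₁ : a₁ = b₁
  · exact hgd t (hd₂ fun h₂ => hne (by rw [h₁, h₂]))
  · exact hd₁ h₁

end Germs

section Orbits

variable {f : ℝ → ℝ} {x y : ℝ} {a b : ℤ}

def HasDyadicAffineLeftGerm (f : ℝ → ℝ) (x : ℝ) : Prop :=
  ∃ a : ℤ, HasSlopeWithin f (Iic x) x a ∧ IsDyadic (f x - 2 ^ a * x)

theorem HasSlopeWithin.Iic_unique (ha : HasSlopeWithin f (Iic x) x a)
    (hb : HasSlopeWithin f (Iic x) x b) : a = b := by
  obtain ⟨u, ⟨hua, hub⟩, hu⟩ :=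
    (((ha.and hb).filter_mono (nhdsWithin_mono x Iio_subset_Iic_self)).and
      self_mem_nhdsWithin).exists
  have hux : u - x ≠ 0 := sub_ne_zero.2 (ne_of_lt hu)
  exact zpow_right_injective₀ two_pos (by norm_num) (mul_right_cancel₀ hux (by linarith))

theorem HasSlopeWithin.hasDyadicAffineLeftGerm_iff (ha : HasSlopeWithin f (Iic x) x a) :
    HasDyadicAffineLeftGerm f x ↔ IsDyadic (f x - 2 ^ a * x) :=
  ⟨fun ⟨_, hb, hd⟩ => ha.Iic_unique hb ▸ hd, fun hd => ⟨a, ha, hd⟩⟩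

theorem HasSlopeWithin.eventually_nhdsLT (ha : HasSlopeWithin f (Iic x) x a) :
    ∀ᶠ y in 𝓝[<] x, HasSlopeWithin f (Iic y) y a ∧ f y - 2 ^ a * y = f x - 2 ^ a * x := by
  obtain ⟨l, hl, hsub⟩ := mem_nhdsLE_iff_exists_Icc_subset.1 ha
  have hform : ∀ u ∈ Icc l x, f u = 2 ^ a * u + (f x - 2 ^ a * x) := fun u hu => by
    rw [hsub hu]; ring
  filter_upwards [Ioo_mem_nhdsLT hl] with y hy
  refine ⟨hasSlopeWithin_Iic_of_Icc hy.1 fun u hu => hform u ⟨hu.1, hu.2.trans hy.2.le⟩, ?_⟩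
  rw [hform y ⟨hy.1.le, hy.2.le⟩]; ring

theorem HasSlopeWithin.eventually_nhdsGT (hb : HasSlopeWithin f (Ici x) x b) :
    ∀ᶠ y in 𝓝[>] x, HasSlopeWithin f (Iic y) y b ∧ f y - 2 ^ b * y = f x - 2 ^ b * x := by
  obtain ⟨r, hr, hsub⟩ := mem_nhdsGE_iff_exists_Icc_subset.1 hb
  have hform : ∀ u ∈ Icc x r, f u = 2 ^ b * u + (f x - 2 ^ b * x) := fun u hu => by
    rw [hsub hu]; ring
  filter_upwards [Ioo_mem_nhdsGT hr] with y hy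
  refine ⟨hasSlopeWithin_Iic_of_Icc hy.1 fun u hu => hform u ⟨hu.1, hu.2.trans hy.2.le⟩, ?_⟩
  rw [hform y ⟨hy.1.le, hy.2.le⟩]; ring

theorem isDyadic_sub_zpow_mul_iff (h : a ≠ b → IsDyadic x) :
    IsDyadic (y - 2 ^ a * x) ↔ IsDyadic (y - 2 ^ b * x) := by
  by_cases hab : a = b
  · rw [hab]
  have hx := ((isDyadic_zpow a).sub (isDyadic_zpow b)).mul (h hab)
  constructor <;> intro hd
  · convert hd.add hx using 1; ring
  · convert hd.sub hx using 1; ring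

theorem IsPL2.isLocallyConstant_hasDyadicAffineLeftGerm (hf : IsPL2 f) :
    IsLocallyConstant (HasDyadicAffineLeftGerm f) := by
  refine (IsLocallyConstant.iff_eventually_eq _).2 fun x => ?_
  obtain ⟨a, b, ha, hb, hab⟩ := hf.hasPL2GermAt x
  have hne : ∀ᶠ y in 𝓝[≠] x, HasDyadicAffineLeftGerm f y ↔ HasDyadicAffineLeftGerm f x := by
    rw [← nhdsLT_sup_nhdsGT, eventually_sup, ha.hasDyadicAffineLeftGerm_iff]
    constructor
    · filter_upwards [ha.eventually_nhdsLT] with y ⟨hy, hyx⟩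
      rw [hy.hasDyadicAffineLeftGerm_iff, hyx]
    · filter_upwards [hb.eventually_nhdsGT] with y ⟨hy, hyx⟩
      rw [hy.hasDyadicAffineLeftGerm_iff, hyx, isDyadic_sub_zpow_mul_iff hab]
  filter_upwards [eventually_nhdsWithin_iff.1 hne] with y hy
  rcases eq_or_ne y x with rfl | hyx
  · rfl
  · exact propext (hy hyx)

theorem IsPL2.dyadicAffineRel_apply (hf : IsPL2 f) {x₀ : ℝ} (h₀ : HasDyadicAffineLeftGerm f x₀)
    (x : ℝ) : DyadicAffineRel x (f x) := by
  obtain ⟨a, -, hd⟩ : HasDyadicAffineLeftGerm f x :=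
    hf.isLocallyConstant_hasDyadicAffineLeftGerm.apply_eq_of_preconnectedSpace x₀ x ▸ h₀
  exact ⟨a, _, hd, by ring⟩

end Orbits

section ThompsonF

variable {f g : ℝ → ℝ} {L R : ℝ} {m m' : ℤ}

theorem IsThompsonF.of_isPL2 (hf : IsPL2 f) (hL : ∀ t ≤ L, f t = t + m)
    (hR : ∀ t, R ≤ t → f t = t + m') : IsThompsonF f := by
  have hL' : ∀ t ≤ min L R, f t = t + m := fun t ht => hL t (ht.trans (min_le_left _ _))
  have hR' : ∀ t, max L R ≤ t → f t = t + m' := fun t ht => hR t ((le_max_right _ _).trans ht)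
  have hLR : min L R ≤ max L R := min_le_max
  refine ⟨⟨hf, min L R, max L R, hLR, fun t ht => ?_, fun t ht => ?_⟩,
    min L R, max L R, m, m', hLR, hL', hR'⟩
  · rw [hL' t ht, hL' _ (by linarith)]; ring
  · rw [hR' t ht, hR' _ (by linarith)]; ring

theorem isThompsonF_of_strictMono (hmono : StrictMono f) (hgerm : ∀ t, HasPL2GermAt f t)
    (hL : ∀ t ≤ L, f t = t + m) (hR : ∀ t, R ≤ t → f t = t + m') : IsThompsonF f := by
  refine .of_isPL2 (isPL2_of_strictMono hmono hgerm ?_ ?_) hL hR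
  · exact (tendsto_atTop_add_const_right _ _ tendsto_id).congr'
      (eventually_ge_atTop R |>.mono fun t ht => (hR t ht).symm)
  · exact (tendsto_atBot_add_const_right _ _ tendsto_id).congr'
      (eventually_le_atBot L |>.mono fun t ht => (hL t ht).symm)

theorem isThompsonF_id : IsThompsonF id := by
  have hslope : ∀ s t, HasSlopeWithin id s t 0 := fun _ _ => .of_forall fun u => by simp
  exact isThompsonF_of_strictMono (m := 0) (m' := 0) (L := 0) (R := 0) strictMono_id
    (fun t => ⟨0, 0, hslope _ _, hslope _ _, absurd rfl⟩) (by simp) (by simp)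

theorem IsThompsonF.strictMono (hf : IsThompsonF f) : StrictMono f := hf.1.1.2.1

theorem IsThompsonF.dyadicAffineRel_apply (hf : IsThompsonF f) (x : ℝ) :
    DyadicAffineRel x (f x) := by
  obtain ⟨⟨hpl, -⟩, L, -, m, -, -, hL, -⟩ := hf
  refine hpl.dyadicAffineRel_apply (x₀ := L)
    ⟨0, eventually_nhdsWithin_of_forall fun u hu => ?_, ?_⟩ x
  · rw [hL u hu, hL L le_rfl]; ring
  · rw [hL L le_rfl]; simpa using isDyadic_intCast m

theorem IsThompsonF.comp (hf : IsThompsonF f) (hg : IsThompsonF g) : IsThompsonF (f ∘ g) := by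
  have hgd : ∀ t, IsDyadic (g t) → IsDyadic t := fun t =>
    (hg.dyadicAffineRel_apply t).symm.isDyadic
  obtain ⟨⟨hfpl, -⟩, Lf, Rf, mf, mf', -, hLf, hRf⟩ := hf
  obtain ⟨⟨hgpl, -⟩, Lg, Rg, mg, mg', -, hLg, hRg⟩ := hg
  refine .of_isPL2 (L := min Lg (Lf - mg)) (R := max Rg (Rf - mg')) (m := mg + mf)
    (m' := mg' + mf') (hfpl.comp hgpl hgd) (fun t ht => ?_) (fun t ht => ?_)
  · have := le_min_iff.1 ht
    rw [comp_apply, hLg t this.1, hLf _ (by linarith)]; push_cast; ring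
  · have := max_le_iff.1 ht
    rw [comp_apply, hRg t this.1, hRf _ (by linarith)]; push_cast; ring

end ThompsonF

/-- The second piece has length `2 ^ k * w`, so that the slope `2 ^ (-k)` brings the map back
to the identity. -/
def scaleBump (c w : ℝ) (k : ℤ) (u : ℝ) : ℝ :=
  if u ≤ c then u
  else if u ≤ c + w then c + 2 ^ k * (u - c)
  else if u ≤ c + w + 2 ^ k * w then c + 2 ^ k * w + 2 ^ (-k) * (u - (c + w))
  else u

section ScaleBump

variable {c w u : ℝ} {k : ℤ}

theorem scaleBump_of_le (hu : u ≤ c) : scaleBump c w k u = u := if_pos hu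

theorem scaleBump_of_mem_Icc₁ (hu : u ∈ Icc c (c + w)) :
    scaleBump c w k u = c + 2 ^ k * (u - c) := by
  rcases hu.1.eq_or_lt with rfl | hcu
  · simp [scaleBump]
  · rw [scaleBump, if_neg hcu.not_ge, if_pos hu.2]

theorem scaleBump_of_mem_Icc₂ (hw : 0 < w) (hu : u ∈ Icc (c + w) (c + w + 2 ^ k * w)) :
    scaleBump c w k u = c + 2 ^ k * w + 2 ^ (-k) * (u - (c + w)) := by
  rcases hu.1.eq_or_lt with rfl | hcu
  · rw [scaleBump_of_mem_Icc₁ ⟨by linarith, le_rfl⟩]; ring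
  · rw [scaleBump, if_neg (by linarith), if_neg hcu.not_ge, if_pos hu.2]

theorem scaleBump_of_ge (hw : 0 < w) (hu : c + w + 2 ^ k * w ≤ u) : scaleBump c w k u = u := by
  have hkw : 0 < 2 ^ k * w := by positivity
  rcases hu.eq_or_lt with rfl | hcu
  · rw [scaleBump_of_mem_Icc₂ hw ⟨by linarith, le_rfl⟩, zpow_neg]
    field_simp
    ring
  · rw [scaleBump, if_neg (by linarith), if_neg (by linarith), if_neg hcu.not_ge]

theorem scaleBump_strictMono (hw : 0 < w) : StrictMono (scaleBump c w k) := by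
  have hkw : 0 < 2 ^ k * w := by positivity
  have h₀ : StrictMonoOn (scaleBump c w k) (Iic c) := fun u hu v hv huv => by
    rwa [scaleBump_of_le hu, scaleBump_of_le hv]
  have h₁ : StrictMonoOn (scaleBump c w k) (Icc c (c + w)) := fun u hu v hv huv => by
    rw [scaleBump_of_mem_Icc₁ hu, scaleBump_of_mem_Icc₁ hv]; gcongr
  have h₂ : StrictMonoOn (scaleBump c w k) (Icc (c + w) (c + w + 2 ^ k * w)) :=
    fun u hu v hv huv => by rw [scaleBump_of_mem_Icc₂ hw hu, scaleBump_of_mem_Icc₂ hw hv]; gcongr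
  have h₃ : StrictMonoOn (scaleBump c w k) (Ici (c + w + 2 ^ k * w)) := fun u hu v hv huv => by
    rwa [scaleBump_of_ge hw hu, scaleBump_of_ge hw hv]
  have h₀₁ : StrictMonoOn (scaleBump c w k) (Iic (c + w)) := by
    rw [← Iic_union_Icc_eq_Iic (by linarith : c ≤ c + w)]
    exact h₀.union h₁ isGreatest_Iic (isLeast_Icc (by linarith))
  have h₀₁₂ : StrictMonoOn (scaleBump c w k) (Iic (c + w + 2 ^ k * w)) := by
    rw [← Iic_union_Icc_eq_Iic (by linarith : c + w ≤ c + w + 2 ^ k * w)]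
    exact h₀₁.union h₂ isGreatest_Iic (isLeast_Icc (by linarith))
  exact h₀₁₂.Iic_union_Ici h₃

theorem scaleBump_hasPL2GermAt (hc : IsDyadic c) (hw : IsDyadic w) (hw0 : 0 < w) (t : ℝ) :
    HasPL2GermAt (scaleBump c w k) t := by
  have hkw : 0 < 2 ^ k * w := by positivity
  have h₀ : ∀ u ∈ Iic c, scaleBump c w k u = 2 ^ (0 : ℤ) * u + 0 := fun u hu => by
    simp [scaleBump_of_le hu]
  have h₁ : ∀ u ∈ Icc c (c + w), scaleBump c w k u = 2 ^ k * u + (c - 2 ^ k * c) :=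
    fun u hu => by rw [scaleBump_of_mem_Icc₁ hu]; ring
  have h₂ : ∀ u ∈ Icc (c + w) (c + w + 2 ^ k * w),
      scaleBump c w k u = 2 ^ (-k) * u + (c + 2 ^ k * w - 2 ^ (-k) * (c + w)) :=
    fun u hu => by rw [scaleBump_of_mem_Icc₂ hw0 hu]; ring
  have h₃ : ∀ u ∈ Ici (c + w + 2 ^ k * w), scaleBump c w k u = 2 ^ (0 : ℤ) * u + 0 :=
    fun u hu => by simp [scaleBump_of_ge hw0 hu]
  rcases lt_trichotomy t c with ht | rfl | ht
  · exact hasPL2GermAt_of_mem_Ioo (l := t - 1) ⟨by linarith, ht⟩ fun u hu => h₀ u hu.2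
  · exact hasPL2GermAt_of_Icc (sub_one_lt t) (lt_add_of_pos_right t hw0)
      (fun u hu => h₀ u hu.2) h₁ fun _ => hc
  rcases lt_trichotomy t (c + w) with ht' | rfl | ht'
  · exact hasPL2GermAt_of_mem_Ioo ⟨ht, ht'⟩ h₁
  · exact hasPL2GermAt_of_Icc ht (lt_add_of_pos_right _ hkw) (fun u hu => h₁ u hu) h₂
      fun _ => hc.add hw
  rcases lt_trichotomy t (c + w + 2 ^ k * w) with ht'' | rfl | ht''
  · exact hasPL2GermAt_of_mem_Ioo ⟨ht', ht''⟩ h₂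
  · exact hasPL2GermAt_of_Icc ht' (lt_add_one _) h₂ (fun u hu => h₃ u hu.1)
      fun _ => (hc.add hw).add ((isDyadic_zpow k).mul hw)
  · exact hasPL2GermAt_of_mem_Ioo (r := t + 1) ⟨ht'', by linarith⟩ fun u hu => h₃ u hu.1

theorem isThompsonF_scaleBump (hc : IsDyadic c) (hw : IsDyadic w) (hw0 : 0 < w) (k : ℤ) :
    IsThompsonF (scaleBump c w k) :=
  isThompsonF_of_strictMono (L := c) (R := c + w + 2 ^ k * w) (m := 0) (m' := 0)
    (scaleBump_strictMono hw0) (scaleBump_hasPL2GermAt hc hw hw0)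
    (fun t ht => by simp [scaleBump_of_le ht])
    (fun t ht => by simp [scaleBump_of_ge hw0 ht])

end ScaleBump

def ReachAbove (p x y : ℝ) : Prop :=
  ∃ h : ℝ → ℝ, IsThompsonF h ∧ (∀ u ≤ p, h u = u) ∧ h x = y

section ReachAbove

variable {p c x y z δ : ℝ}

theorem ReachAbove.trans (h₁ : ReachAbove p x y) (h₂ : ReachAbove p y z) : ReachAbove p x z := by
  obtain ⟨f, hf, hfp, rfl⟩ := h₁
  obtain ⟨g, hg, hgp, rfl⟩ := h₂
  exact ⟨g ∘ f, hg.comp hf, fun u hu => by rw [comp_apply, hfp u hu, hgp u hu], rfl⟩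

theorem reachAbove_scale (hc : IsDyadic c) (hpc : p ≤ c) (hcx : c < x) (k : ℤ) :
    ReachAbove p x (c + 2 ^ k * (x - c)) := by
  obtain ⟨w, hw, hxw, -⟩ := exists_isDyadic_btwn (lt_add_one (x - c))
  exact ⟨scaleBump c w k, isThompsonF_scaleBump hc hw (by linarith) k,
    fun u hu => scaleBump_of_le (hu.trans hpc), scaleBump_of_mem_Icc₁ ⟨hcx.le, by linarith⟩⟩

/-- Scaling by `2` about `c` and then by `2⁻¹` about `c + 2 δ` is the translation by `δ`. -/
theorem reachAbove_add_of_lt (hδ : IsDyadic δ) (h₁ : p + δ < z) (h₂ : p < z + 2 * δ) :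
    ReachAbove p z (z + δ) := by
  obtain ⟨c, hc, hpc, hcz⟩ := exists_isDyadic_btwn (show max p (p - 2 * δ) < min z (z - δ) by
    simp only [max_lt_iff, lt_min_iff]; constructor <;> constructor <;> linarith)
  simp only [max_lt_iff, lt_min_iff] at hpc hcz
  have step₁ := reachAbove_scale hc hpc.1.le hcz.1 1
  have step₂ := reachAbove_scale (p := p) (x := c + 2 ^ (1 : ℤ) * (z - c)) (hc.add (hδ.add hδ))
    (by linarith) (by rw [zpow_one]; linarith) (-1)
  convert step₁.trans step₂ using 1
  rw [zpow_one, zpow_neg_one]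
  ring

/-- Dilate by `2 ^ n` about `c`, translate by `δ`, and contract by `2 ^ (-n)` about `c + δ`; the
dilation makes `δ` small compared with the distance to `p`. -/
theorem reachAbove_add (hδ : IsDyadic δ) (hz : p < z) (hzδ : p < z + δ) :
    ReachAbove p z (z + δ) := by
  obtain ⟨c, hc, hpc, hcz⟩ := exists_isDyadic_btwn (show max p (p - δ) < z by
    rw [max_lt_iff]; constructor <;> linarith)
  rw [max_lt_iff] at hpc
  obtain ⟨n, hn⟩ := pow_unbounded_of_one_lt (2 * |δ| / (z - c)) one_lt_two
  rw [div_lt_iff₀ (by linarith)] at hn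
  have hδle := le_abs_self δ
  have hδge := neg_abs_le δ
  have step₁ := reachAbove_scale hc hpc.1.le hcz n
  rw [← zpow_natCast] at hn
  have step₂ := reachAbove_add_of_lt (p := p) (z := c + 2 ^ (n : ℤ) * (z - c)) hδ
    (by linarith) (by linarith)
  have step₃ := reachAbove_scale (p := p) (x := c + 2 ^ (n : ℤ) * (z - c) + δ) (hc.add hδ)
    (by linarith) (by linarith) (-n)
  convert step₁.trans (step₂.trans step₃) using 1
  rw [zpow_neg]
  field_simp
  ring

theorem ReachAbove.of_dyadicAffineRel (hx : p < x) (hy : p < y) (h : DyadicAffineRel x y) :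
    ReachAbove p x y := by
  obtain ⟨a, d, hd, rfl⟩ := h
  obtain ⟨c, hc, hpc, hcx⟩ := exists_isDyadic_btwn hx
  have hcz : c < c + 2 ^ a * (x - c) := lt_add_of_pos_right c (by have := sub_pos.2 hcx; positivity)
  have step₁ := reachAbove_scale hc hpc.le hcx a
  have step₂ := reachAbove_add (p := p) (z := c + 2 ^ a * (x - c)) (δ := d + 2 ^ a * c - c)
    ((hd.add ((isDyadic_zpow a).mul hc)).sub hc) (by linarith) (by linarith)
  convert step₁.trans step₂ using 1
  ring

end ReachAbove

theorem exists_lt_forall_le_of_forall_lt {ι : Type*} [Finite ι] {v : ι → ℝ} {m : ℝ}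
    (h : ∀ i, v i < m) : ∃ p < m, ∀ i, v i ≤ p := by
  cases isEmpty_or_nonempty ι
  · exact ⟨m - 1, sub_one_lt m, isEmptyElim⟩
  · obtain ⟨j, hj⟩ := Finite.exists_max v
    exact ⟨v j, h j, hj⟩

/-- Each new point is moved into place by an element fixing everything at or below the
previously placed points. -/
theorem exists_isThompsonF_apply_eq_of_dyadicAffineRel {r : ℕ} (α β : Fin r → ℝ)
    (hα : StrictMono α) (hβ : StrictMono β) (h : ∀ i, DyadicAffineRel (α i) (β i)) :
    ∃ g, IsThompsonF g ∧ ∀ i, g (α i) = β i := by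
  induction r with
  | zero => exact ⟨id, isThompsonF_id, finZeroElim⟩
  | succ r ih =>
    obtain ⟨g, hg, hgα⟩ := ih (α ∘ Fin.castSucc) (β ∘ Fin.castSucc)
      (hα.comp Fin.strictMono_castSucc) (hβ.comp Fin.strictMono_castSucc) fun i => h _
    have hlt : ∀ i : Fin r, β i.castSucc < min (g (α (Fin.last r))) (β (Fin.last r)) := fun i =>
      have hi := Fin.castSucc_lt_last i
      lt_min ((hgα i).symm.trans_lt (hg.strictMono (hα hi))) (hβ hi)
    obtain ⟨p, hpm, hp⟩ := exists_lt_forall_le_of_forall_lt hlt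
    obtain ⟨k, hk, hkp, hkα⟩ := ReachAbove.of_dyadicAffineRel
      (hpm.trans_le (min_le_left _ _)) (hpm.trans_le (min_le_right _ _))
      ((hg.dyadicAffineRel_apply _).symm.trans (h (Fin.last r)))
    exact ⟨k ∘ g, hk.comp hg,
      Fin.lastCases hkα fun i => (congrArg k (hgα i)).trans (hkp _ (hp i))⟩

theorem simultaneous_transitivity_general (r : ℕ) (α β : Fin r → ℚ)
    (hαmono : StrictMono α) (hβmono : StrictMono β) :
    (∃ g : ℝ → ℝ, IsThompsonF g ∧ ∀ i, g (α i : ℝ) = (β i : ℝ)) ↔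
      ∀ i, ∃ gi : ℝ → ℝ, IsThompsonF gi ∧ gi (α i : ℝ) = (β i : ℝ) := by
  refine ⟨fun ⟨g, hg, hgα⟩ i => ⟨g, hg, hgα i⟩, fun h => ?_⟩
  refine exists_isThompsonF_apply_eq_of_dyadicAffineRel _ _
    (Rat.cast_strictMono.comp hαmono) (Rat.cast_strictMono.comp hβmono) fun i => ?_
  obtain ⟨gi, hgi, hgiα⟩ := h i
  exact hgiα ▸ hgi.dyadicAffineRel_apply _

/-- **Statement 15** (Simultaneous transitivity). For dyadic `η < ζ` and two strictly
increasing finite sequences of rationals in `(η, ζ)`, there is a single `g ∈ F` with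
`g(αᵢ) = βᵢ` for all `i` if and only if for each `i` separately some `gᵢ ∈ F` has
`gᵢ(αᵢ) = βᵢ`. -/
theorem simultaneous_transitivity (η ζ : ℝ) (hη : IsDyadic η) (hζ : IsDyadic ζ)
    (hηζ : η < ζ) (r : ℕ) (α β : Fin r → ℚ)
    (hαmono : StrictMono α) (hβmono : StrictMono β)
    (hα : ∀ i, η < (α i : ℝ) ∧ (α i : ℝ) < ζ)
    (hβ : ∀ i, η < (β i : ℝ) ∧ (β i : ℝ) < ζ) :
    (∃ g : ℝ → ℝ, IsThompsonF g ∧ ∀ i, g (α i : ℝ) = (β i : ℝ)) ↔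
      ∀ i, ∃ gi : ℝ → ℝ, IsThompsonF gi ∧ gi (α i : ℝ) = (β i : ℝ) :=
  simultaneous_transitivity_general r α β hαmono hβmono
end
end
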